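/- In the setup of the main theorem, if V is the vertex set of a connected component of the graph G_x associated to the locally finite fundamental cycle c_x = Σ_j Σ_{γ∈Γ} f_j(γ⁻¹·x)·(γ·σ_j) of M̃, then the partial sum c_{x,V} = Σ_{j=1}^m Σ_{γ∈V} f_j(γ⁻¹·x)·(γ·σ_j) is a well-defined locally finite cycle in C_n^{lf}(M̃;Z), i.e., ∂(c_{x,V}) = 0. -/

import Mathlib

open MeasureTheory ENNReal

namespace Paper

/-- A partial measurable isomorphism whose graph is contained in the relation `r`
(an element of the pseudo-full group `⟦r⟧`). -/
structure PartialIso (X : Type*) [MeasurableSpace X] (r : X → X → Prop) where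
  dom : Set X
  toFun : X → X
  dom_meas : MeasurableSet dom
  meas : Measurable toFun
  injOn : Set.InjOn toFun dom
  image_meas : MeasurableSet (toFun '' dom)
  mem_rel : ∀ x ∈ dom, r x (toFun x)

/-- A (countable) family of partial isomorphisms is a graphing of `r` if the equivalence
relation it generates is exactly `r`. -/
def IsGraphing {X : Type*} [MeasurableSpace X] {r : X → X → Prop}
    (Φ : ℕ → PartialIso X r) : Prop :=
  ∀ x y, r x y ↔
    Relation.EqvGen (fun a b => ∃ i, a ∈ (Φ i).dom ∧ b = (Φ i).toFun a) x y

/-- The cost of a relation `r` on a measure space: the infimum over graphings of the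
sum of the measures of the domains. -/
noncomputable def cost {X : Type*} [MeasurableSpace X] (μ : Measure X)
    (r : X → X → Prop) : ℝ≥0∞ :=
  ⨅ Φ : {Φ : ℕ → PartialIso X r // IsGraphing Φ}, ∑' i, μ ((Φ.1 i).dom)

/-- A standard equivalence relation: measurable, countable classes, and all measurable
automorphisms preserving the classes preserve the measure. -/
structure IsStdEqRel {X : Type*} [MeasurableSpace X] (μ : Measure X)
    (r : X → X → Prop) : Prop where
  equivalence : Equivalence r
  measurableSet_rel : MeasurableSet {p : X × X | r p.1 p.2}
  countable_classes : ∀ x, {y | r x y}.Countable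
  fullGroup_measurePreserving :
    ∀ f : X ≃ᵐ X, (∀ x y, r x y → r (f x) (f y)) → MeasurePreserving f μ μ

/-- A set is invariant under a relation. -/
def IsInvariant {X : Type*} (r : X → X → Prop) (A : Set X) : Prop :=
  ∀ x ∈ A, ∀ y, r x y → y ∈ A

/-- A complete section: every orbit meets the set. -/
def IsCompleteSection {X : Type*} (r : X → X → Prop) (A : Set X) : Prop :=
  ∀ x : X, ∃ y ∈ A, r x y

/-- A relation is aperiodic if almost every orbit is infinite. -/
def IsAperiodic {X : Type*} [MeasurableSpace X] (μ : Measure X)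
    (r : X → X → Prop) : Prop :=
  ∀ᵐ x ∂μ, {y | r x y}.Infinite

/-- A relation is ergodic if every invariant measurable set is null or conull. -/
def IsErgodicRel {X : Type*} [MeasurableSpace X] (μ : Measure X)
    (r : X → X → Prop) : Prop :=
  ∀ A : Set X, MeasurableSet A → IsInvariant r A → μ A = 0 ∨ μ Aᶜ = 0

/-- `R ⊂ S` is a translation finite extension: finitely many full-group elements of `S`
suffice to cover almost every `S`-orbit by translates of `R`-orbits. -/
def IsTransFinExt {X : Type*} [MeasurableSpace X] (μ : Measure X)
    (r s : X → X → Prop) : Prop :=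
  (∀ x y, r x y → s x y) ∧
  ∃ F : Finset (X ≃ᵐ X), (∀ f ∈ F, ∀ x, s x (f x)) ∧
    ∀ᵐ x ∂μ, ∀ y, s x y ↔ ∃ f ∈ F, ∃ g ∈ F, ∃ z, r (g.symm x) z ∧ y = f z


open MeasureTheory ENNReal
open scoped Classical

namespace SimplexCategory

/-- The topological simplex associated to `x : SimplexCategory` (the definition that
Mathlib carried under this name in December 2024). -/
def toTopObj (x : _root_.SimplexCategory) := { f : Fin (x.len + 1) → NNReal | ∑ i, f i = 1 }

/-- A morphism in `SimplexCategory` induces a map on the associated topological spaces. -/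
def toTopMap {x y : _root_.SimplexCategory} (f : x ⟶ y) (g : toTopObj x) : toTopObj y :=
  ⟨fun i => ∑ j ∈ Finset.univ.filter (f.toOrderHom · = i), g.1 j, by
    show ∑ i, ∑ j ∈ Finset.univ.filter (f.toOrderHom · = i), g.1 j = 1
    exact (Finset.sum_fiberwise Finset.univ (fun j => f.toOrderHom j) (fun j => g.1 j)).trans g.2⟩

theorem continuous_toTopMap {x y : _root_.SimplexCategory} (f : x ⟶ y) :
    Continuous (toTopMap f) := by
  refine Continuous.subtype_mk (continuous_pi fun i => ?_) _
  exact continuous_finsetSum _ (fun j _ => (continuous_apply _).comp continuous_subtype_val)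

end SimplexCategory

/-- Singular `n`-simplices in a space `N`. -/
abbrev SSimplex (n : ℕ) (N : Type*) [TopologicalSpace N] : Type _ :=
  C(SimplexCategory.toTopObj (SimplexCategory.mk n), N)

/-- The `k`-th face of a singular `(n+1)`-simplex. -/
noncomputable def faceMap {N : Type*} [TopologicalSpace N] {n : ℕ} (k : Fin (n + 2))
    (σ : SSimplex (n + 1) N) : SSimplex n N :=
  σ.comp ⟨SimplexCategory.toTopMap (SimplexCategory.δ k),
    SimplexCategory.continuous_toTopMap _⟩

/-- The `i`-th vertex of the topological standard simplex. -/
noncomputable def vertex {n : ℕ} (i : Fin (n + 1)) :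
    SimplexCategory.toTopObj (SimplexCategory.mk n) :=
  ⟨fun j => if j = i then 1 else 0, by
    simp only [SimplexCategory.toTopObj, Set.mem_setOf_eq]
    exact (Finset.sum_eq_single_of_mem i (Finset.mem_univ i) fun b _ hb => if_neg hb).trans (if_pos rfl)⟩

/-- The coefficient of `τ` in the boundary of the chain with coefficients `c`. -/
noncomputable def bdryCoeff {N : Type*} [TopologicalSpace N] {Z : Type*} [CommRing Z]
    {n : ℕ} (c : SSimplex (n + 1) N → Z) (τ : SSimplex n N) : Z :=
  ∑ᶠ σ : SSimplex (n + 1) N,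
    ∑ k : Fin (n + 2), if faceMap k σ = τ then ((-1 : ℤ) ^ (k : ℕ)) • c σ else 0

/-- Locally finite singular chains with coefficients in `Z`. -/
structure LFChain (n : ℕ) (N : Type*) [TopologicalSpace N] (Z : Type*) [CommRing Z] where
  coeff : SSimplex n N → Z
  locFin : ∀ K : Set N, IsCompact K →
    {σ : SSimplex n N | coeff σ ≠ 0 ∧ (Set.range σ ∩ K).Nonempty}.Finite

/-- A locally finite chain is a cycle if its boundary vanishes (in degree 0 there is
no condition). -/
def IsLFCycle {N : Type*} [TopologicalSpace N] {Z : Type*} [CommRing Z] :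
    ∀ {n : ℕ}, LFChain n N Z → Prop
  | 0, _ => True
  | _ + 1, c => ∀ τ, bdryCoeff c.coeff τ = 0

/-- A coefficient function is a locally finite boundary. -/
def IsLFBoundary {N : Type*} [TopologicalSpace N] {Z : Type*} [CommRing Z] {n : ℕ}
    (f : SSimplex n N → Z) : Prop :=
  ∃ b : LFChain (n + 1) N Z, ∀ τ, f τ = bdryCoeff b.coeff τ

/-- Restriction of a locally finite chain at a point `x`: keep only the simplices whose
image contains `x`; this is a finite chain. -/
noncomputable def restr {N : Type*} [TopologicalSpace N] {Z : Type*} [CommRing Z]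
    {n : ℕ} (x : N) (c : LFChain n N Z) : SSimplex n N →₀ Z :=
  Finsupp.onFinset (c.locFin {x} isCompact_singleton).toFinset
    (fun σ => if x ∈ Set.range σ then c.coeff σ else 0)
    (by
      intro σ h
      rw [Set.Finite.mem_toFinset]
      by_cases hx : x ∈ Set.range σ
      · simp only [if_pos hx] at h
        exact ⟨h, ⟨x, hx, rfl⟩⟩
      · simp only [if_neg hx, ne_eq, not_true_eq_false] at h)

/-- Restriction of a finite chain at a point `x`. -/
noncomputable def finRestr {N : Type*} [TopologicalSpace N] {Z : Type*} [CommRing Z]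
    {n : ℕ} (x : N) (w : SSimplex n N →₀ Z) : SSimplex n N →₀ Z :=
  Finsupp.onFinset w.support
    (fun σ => if x ∈ Set.range σ then w σ else 0)
    (by
      intro σ h
      by_cases hx : x ∈ Set.range σ
      · simp only [if_pos hx] at h
        exact Finsupp.mem_support_iff.mpr h
      · simp only [if_neg hx, ne_eq, not_true_eq_false] at h)

/-- A finite chain is a relative cycle relative to `N \ {x}`: its boundary is supported
on simplices avoiding `x`. -/
def IsRelCycle {N : Type*} [TopologicalSpace N] {Z : Type*} [CommRing Z] :
    ∀ {n : ℕ}, N → (SSimplex n N →₀ Z) → Prop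
  | 0, _, _ => True
  | m + 1, x, c => ∀ τ : SSimplex m N, x ∈ Set.range (⇑τ) → bdryCoeff (⇑c) τ = 0

/-- Two finite chains are homologous relative to `N \ {x}`. -/
def RelHomologous {N : Type*} [TopologicalSpace N] {Z : Type*} [CommRing Z] {n : ℕ}
    (x : N) (c c' : SSimplex n N →₀ Z) : Prop :=
  ∃ b : SSimplex (n + 1) N →₀ Z, ∀ τ : SSimplex n N, x ∈ Set.range (⇑τ) → c τ - c' τ = bdryCoeff (⇑b) τ

/-- A relative cycle `c` generates the local homology `H_n(N, N \ {x}; Z) ≅ Z`. -/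
def IsLocalGenerator {N : Type*} [TopologicalSpace N] {Z : Type*} [CommRing Z] {n : ℕ}
    (x : N) (c : SSimplex n N →₀ Z) : Prop :=
  IsRelCycle x c ∧
    ∀ d : SSimplex n N →₀ Z, IsRelCycle x d → ∃! a : Z, RelHomologous x d (a • c)

/-- A locally finite fundamental cycle: a locally finite cycle whose restriction at every
point generates the local homology. This encodes (a representative of) the locally finite
fundamental class of an oriented manifold. -/
def IsLFFundamentalClass {N : Type*} [TopologicalSpace N] {Z : Type*} [CommRing Z]
    {n : ℕ} (c : LFChain n N Z) : Prop :=
  IsLFCycle c ∧ ∀ x : N, IsLocalGenerator x (restr x c)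

/-- A finite chain is a cycle. -/
def IsFinCycle {N : Type*} [TopologicalSpace N] {Z : Type*} [CommRing Z] :
    ∀ {n : ℕ}, (SSimplex n N →₀ Z) → Prop
  | 0, _ => True
  | _ + 1, w => ∀ τ, bdryCoeff (⇑w) τ = 0

/-- A fundamental cycle of a closed manifold: a finite cycle whose restriction at every
point generates the local homology. -/
def IsFinFundCycle {N : Type*} [TopologicalSpace N] {Z : Type*} [CommRing Z] {n : ℕ}
    (w : SSimplex n N →₀ Z) : Prop :=
  IsFinCycle w ∧ ∀ x : N, IsLocalGenerator x (finRestr x w)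


open MeasureTheory ENNReal
open scoped Classical

/-- A parametrised chain: an element of `L^∞(X, Z) ⊗_{ZΓ} C_n(M̃; Z)`, encoded as a
`Γ`-equivariant family of bounded measurable `Z`-valued coefficient functions indexed by
the singular simplices of the universal cover, supported on finitely many `Γ`-orbits. -/
structure ParamChain (n : ℕ) (Γ : Type*) [Group Γ] (Mt : Type*) [TopologicalSpace Mt]
    [MulAction Γ Mt] [ContinuousConstSMul Γ Mt]
    (X : Type*) [MeasurableSpace X] [MulAction Γ X] (Z : Type*) [CommRing Z] where
  coeff : SSimplex n Mt → X → Z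
  measurable_level : ∀ σ z, MeasurableSet {x | coeff σ x = z}
  finiteRange : ∀ σ, (Set.range (coeff σ)).Finite
  equivariant : ∀ (γ : Γ) σ x, coeff (γ • σ) x = coeff σ (γ⁻¹ • x)
  orbitFinite : ∃ s : Finset (SSimplex n Mt),
    ∀ σ, coeff σ ≠ 0 → ∃ τ ∈ s, ∃ γ : Γ, σ = γ • τ

variable {n : ℕ} {Γ : Type*} [Group Γ] {Mt : Type*} [TopologicalSpace Mt]
  [MulAction Γ Mt] [ContinuousConstSMul Γ Mt]
  {X : Type*} [MeasurableSpace X] [MulAction Γ X] {Z : Type*} [CommRing Z]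

/-- The coefficient of the boundary of a parametrised chain. -/
noncomputable def pbdryCoeff (b : ParamChain (n + 1) Γ Mt X Z)
    (σ : SSimplex n Mt) (x : X) : Z :=
  ∑ᶠ τ : SSimplex (n + 1) Mt,
    ∑ k : Fin (n + 2), if faceMap k τ = σ then ((-1 : ℤ) ^ (k : ℕ)) • b.coeff τ x else 0

/-- A parametrised chain is a cycle. -/
def IsParamCycle : ∀ {n : ℕ}, ParamChain n Γ Mt X Z → Prop
  | 0, _ => True
  | _ + 1, c => ∀ σ x, pbdryCoeff c σ x = 0

/-- Two parametrised chains are homologous. -/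
def ParamHomologous (c c' : ParamChain n Γ Mt X Z) : Prop :=
  ∃ b : ParamChain (n + 1) Γ Mt X Z, ∀ σ x, c.coeff σ x - c'.coeff σ x = pbdryCoeff b σ x

/-- A parametrised fundamental cycle: a parametrised cycle homologous to the image of a
`Z`-fundamental cycle of `M` under the canonical inclusion. -/
def IsParamFundCycle {M : Type*} [TopologicalSpace M] (p : C(Mt, M))
    (c : ParamChain n Γ Mt X Z) : Prop :=
  IsParamCycle c ∧
    ∃ w : SSimplex n M →₀ Z, IsFinFundCycle w ∧
      ∃ c₀ : ParamChain n Γ Mt X Z,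
        (∀ σ x, c₀.coeff σ x = w (p.comp σ)) ∧ ParamHomologous c c₀

/-- The `ℓ¹`-norm (in reduced form) of a parametrised integral chain: the sum over the
`Γ`-orbits of simplices of the integral of the absolute value of the coefficient function. -/
noncomputable def paramNorm (μ : Measure X) (c : ParamChain n Γ Mt X ℤ) : ℝ≥0∞ :=
  ∑' o : Quotient (MulAction.orbitRel Γ (SSimplex n Mt)),
    sSup {r : ℝ≥0∞ | ∃ σ : SSimplex n Mt,
      Quotient.mk (MulAction.orbitRel Γ (SSimplex n Mt)) σ = o ∧
      r = ∫⁻ x, ((c.coeff σ x).natAbs : ℝ≥0∞) ∂μ}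

/-- The weightless norm of a parametrised chain: the sum over the `Γ`-orbits of simplices
of the measure of the support of the coefficient function. -/
noncomputable def weightlessNorm (μ : Measure X) (c : ParamChain n Γ Mt X Z) : ℝ≥0∞ :=
  ∑' o : Quotient (MulAction.orbitRel Γ (SSimplex n Mt)),
    sSup {r : ℝ≥0∞ | ∃ σ : SSimplex n Mt,
      Quotient.mk (MulAction.orbitRel Γ (SSimplex n Mt)) σ = o ∧
      r = μ {x | c.coeff σ x ≠ 0}}

/-- The `α`-parametrised simplicial volume: the infimal `ℓ¹`-norm of parametrised
fundamental cycles. -/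
noncomputable def paramSV (n : ℕ) (Γ : Type*) [Group Γ] (Mt : Type*) [TopologicalSpace Mt]
    [MulAction Γ Mt] [ContinuousConstSMul Γ Mt] (M : Type*) [TopologicalSpace M]
    (p : C(Mt, M)) (X : Type*) [MeasurableSpace X] [MulAction Γ X]
    (μ : Measure X) : ℝ≥0∞ :=
  ⨅ c : {c : ParamChain n Γ Mt X ℤ // IsParamFundCycle p c}, paramNorm μ c.1

/-- The weightless `(α; Z)`-parametrised simplicial volume. -/
noncomputable def weightlessSV (n : ℕ) (Γ : Type*) [Group Γ] (Mt : Type*)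
    [TopologicalSpace Mt] [MulAction Γ Mt] [ContinuousConstSMul Γ Mt] (M : Type*)
    [TopologicalSpace M] (p : C(Mt, M)) (X : Type*) [MeasurableSpace X] [MulAction Γ X]
    (μ : Measure X) (Z : Type*) [CommRing Z] : ℝ≥0∞ :=
  ⨅ c : {c : ParamChain n Γ Mt X Z // IsParamFundCycle p c}, weightlessNorm μ c.1

/-- A standard `Γ`-space: a standard Borel probability space with a measurable
measure-preserving `Γ`-action. -/
structure StdGammaSpace (Γ : Type*) [Group Γ] where
  carrier : Type
  mX : MeasurableSpace carrier
  std : @StandardBorelSpace carrier mX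
  act : MulAction Γ carrier
  μ : @Measure carrier mX
  prob : @IsProbabilityMeasure carrier mX μ
  pres : ∀ γ : Γ, @MeasurePreserving carrier carrier mX mX
    (fun x => @SMul.smul Γ carrier act.toSMul γ x) μ μ

/-- The orbit relation of a standard `Γ`-space. -/
def StdGammaSpace.orbitRel {Γ : Type*} [Group Γ] (α : StdGammaSpace Γ) :
    α.carrier → α.carrier → Prop :=
  fun x y => ∃ γ : Γ, y = @SMul.smul Γ α.carrier α.act.toSMul γ x

/-- The cost of a standard `Γ`-space. -/
noncomputable def StdGammaSpace.cost {Γ : Type*} [Group Γ] (α : StdGammaSpace Γ) :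
    ℝ≥0∞ := by
  letI := α.mX
  exact Paper.cost α.μ α.orbitRel

/-- The cost of a group: the infimum of the costs of its standard `Γ`-spaces. -/
noncomputable def groupCost (Γ : Type*) [Group Γ] : ℝ≥0∞ :=
  ⨅ α : StdGammaSpace Γ, α.cost

/-- The parametrised simplicial volume of a standard `Γ`-space. -/
noncomputable def StdGammaSpace.paramSV {Γ : Type*} [Group Γ] (α : StdGammaSpace Γ)
    (n : ℕ) (Mt : Type*) [TopologicalSpace Mt] [MulAction Γ Mt]
    [ContinuousConstSMul Γ Mt] (M : Type*) [TopologicalSpace M] (p : C(Mt, M)) :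
    ℝ≥0∞ := by
  letI := α.mX
  letI := α.act
  exact Paper.paramSV n Γ Mt M p α.carrier α.μ

/-- The integral foliated simplicial volume: the infimum of the parametrised simplicial
volumes over all standard `Γ`-spaces. -/
noncomputable def ifsv (n : ℕ) (Γ : Type*) [Group Γ] (Mt : Type*) [TopologicalSpace Mt]
    [MulAction Γ Mt] [ContinuousConstSMul Γ Mt] (M : Type*) [TopologicalSpace M]
    (p : C(Mt, M)) : ℝ≥0∞ :=
  ⨅ α : StdGammaSpace Γ, α.paramSV n Mt M p


open MeasureTheory ENNReal
open scoped Pointwise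

/-! Let `S` be the set of simplices `γ • σ j` with `γ ∈ V`. These translates are pairwise
distinct (the action is free and `c` is reduced), so `c_{x,V}` is the restriction of `c_x`
to `S`. A simplex in the support of `c_x` that shares a face with one in `S` is joined to it
by an edge of `G_x`, hence lies in `S` because `V` is a component. So near every face,
`c_{x,V}` either agrees with `c_x` or vanishes, and its boundary vanishes because that of
`c_x` does. -/

theorem smul_left_injective_of_free {T : Type*} [TopologicalSpace T] [Nonempty T]
    (hfree : ∀ (γ : Γ) (y : Mt), γ • y = y → γ = 1) (σ : C(T, Mt)) :
    Function.Injective fun γ : Γ => γ • σ := by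
  intro γ γ' h
  obtain ⟨t⟩ := ‹Nonempty T›
  have ht : (γ'⁻¹ * γ) • σ t = σ t := by
    rw [mul_smul, inv_smul_eq_iff]
    exact ContinuousMap.congr_fun h t
  exact (inv_mul_eq_one.mp (hfree _ _ ht)).symm

theorem finsum_mem_sum_ite_eq_indicator {α ι Y M : Type*} [Fintype ι] [AddCommMonoid M]
    {rep : α → ι → Y} (hrep : ∀ a b i j, rep a i = rep b j → a = b ∧ i = j)
    {w : α → ι → M} {h : Y → M} (hw : ∀ a i, h (rep a i) = w a i) (V : Set α) :
    (fun y => ∑ᶠ a ∈ V, ∑ i, if y = rep a i then w a i else 0) =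
      {y | ∃ a ∈ V, ∃ i, y = rep a i}.indicator h := by
  funext y
  by_cases hy : ∃ a i, y = rep a i
  · obtain ⟨a₀, i₀, rfl⟩ := hy
    have hterm : ∀ a, (∑ i, if rep a₀ i₀ = rep a i then w a i else 0) =
        if a = a₀ then w a₀ i₀ else 0 := by
      intro a
      split_ifs with ha
      · subst ha
        rw [Finset.sum_eq_single i₀ (fun i _ hi => if_neg fun e => hi (hrep _ _ _ _ e).2.symm)
          (fun h => absurd (Finset.mem_univ i₀) h), if_pos rfl]
      · exact Finset.sum_eq_zero fun i _ => if_neg fun e => ha (hrep _ _ _ _ e).1.symm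
    have hmem : rep a₀ i₀ ∈ {y | ∃ a ∈ V, ∃ i, y = rep a i} ↔ a₀ ∈ V :=
      ⟨fun ⟨a, ha, i, e⟩ => (hrep _ _ _ _ e).1 ▸ ha, fun ha => ⟨a₀, ha, i₀, rfl⟩⟩
    simp only [hterm, Set.indicator_apply, hmem, hw]
    rw [finsum_mem_def, finsum_eq_single _ a₀ fun a ha => by simp [Set.indicator_apply, ha]]
    simp [Set.indicator_apply]
  · push Not at hy
    rw [Set.indicator_of_notMem (by rintro ⟨a, -, i, e⟩; exact hy a i e)]
    exact finsum_mem_eq_zero_of_forall_eq_zero fun a _ =>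
      Finset.sum_eq_zero fun i _ => if_neg (hy a i)

section Chains

variable {N : Type*} [TopologicalSpace N]

noncomputable def LFChain.indicator (c : LFChain n N Z) (S : Set (SSimplex n N)) :
    LFChain n N Z where
  coeff := S.indicator c.coeff
  locFin K hK := (c.locFin K hK).subset fun _ hσ =>
    ⟨fun h => hσ.1 (Set.indicator_apply_eq_zero.2 fun _ => h), hσ.2⟩

theorem bdryCoeff_congr {c c' : SSimplex (n + 1) N → Z} {τ : SSimplex n N}
    (h : ∀ σ k, faceMap k σ = τ → c σ = c' σ) : bdryCoeff c τ = bdryCoeff c' τ := by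
  unfold bdryCoeff
  refine finsum_congr fun σ => Finset.sum_congr rfl fun k _ => ?_
  split_ifs with hk
  · rw [h σ k hk]
  · rfl

theorem bdryCoeff_zero (τ : SSimplex n N) : bdryCoeff (0 : SSimplex (n + 1) N → Z) τ = 0 := by
  simp [bdryCoeff]

theorem bdryCoeff_indicator_eq_zero {c : SSimplex (n + 1) N → Z} (hc : ∀ τ, bdryCoeff c τ = 0)
    {S : Set (SSimplex (n + 1) N)}
    (hS : ∀ σ ∈ S, ∀ σ', c σ ≠ 0 → c σ' ≠ 0 → ∀ k l, faceMap k σ = faceMap l σ' → σ' ∈ S)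
    (τ : SSimplex n N) : bdryCoeff (S.indicator c) τ = 0 := by
  by_cases hτ : ∃ σ ∈ S, c σ ≠ 0 ∧ ∃ k, faceMap k σ = τ
  · obtain ⟨σ, hσS, hσ, k, rfl⟩ := hτ
    rw [← hc (faceMap k σ)]
    refine bdryCoeff_congr fun σ' l hl => ?_
    by_cases hσ' : c σ' = 0
    · simp [hσ']
    · exact Set.indicator_of_mem (hS σ hσS σ' hσ hσ' k l hl.symm) c
  · push Not at hτ
    rw [← bdryCoeff_zero (Z := Z) τ]
    refine bdryCoeff_congr fun σ' l hl => ?_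
    by_cases hσS : σ' ∈ S
    · rw [Set.indicator_of_mem hσS]
      by_contra h
      exact hτ σ' hσS h l hl
    · exact Set.indicator_of_notMem hσS c

end Chains

theorem edge_implies_R_equivalent_general
    (n : ℕ)
    (Γ : Type) [Group Γ]
    (Mt : Type) [TopologicalSpace Mt]
    [MulAction Γ Mt] [ContinuousConstSMul Γ Mt]
    (hfree : ∀ (γ : Γ) (y : Mt), γ • y = y → γ = 1)
    (X : Type) [MeasurableSpace X] [MulAction Γ X]
    -- c = Σ_j f_j ⊗ σ_j is a parametrised fundamental cycle in reduced form
    (m : ℕ) (f : Fin m → X → ℤ) (σ : Fin m → SSimplex (n + 1) Mt)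
    (c : ParamChain (n + 1) Γ Mt X ℤ)
    (hcoeff : ∀ (j) (γ : Γ) (x), c.coeff (γ • σ j) x = f j (γ⁻¹ • x))
    (hsupp : ∀ τ, c.coeff τ ≠ 0 → ∃ j, ∃ γ : Γ, τ = γ • σ j)
    (hred : ∀ i j (γ : Γ), γ • σ i = σ j → i = j)
    (x : X)
    (Edge : Γ → Γ → Prop)
    (hEdge : ∀ γ ℓ : Γ, Edge γ ℓ ↔ γ ≠ ℓ ∧
      ∃ i j, ∃ k l : Fin (n + 2),
        faceMap k (γ • σ i) = faceMap l (ℓ • σ j) ∧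
          f i (γ⁻¹ • x) ≠ 0 ∧ f j (ℓ⁻¹ • x) ≠ 0)
    -- `c_x` is a well-defined locally finite cycle
    (hcx_lf : ∃ lf : LFChain (n + 1) Mt ℤ, lf.coeff = fun τ => c.coeff τ x)
    (hcx_cycle : ∀ τ, bdryCoeff (fun τ' => c.coeff τ' x) τ = 0)
    -- `V` is (the vertex set of) a connected component of `G_x`
    (V : Set Γ)
    (hVclosed : ∀ γ ∈ V, ∀ ℓ, Edge γ ℓ → ℓ ∈ V) :
    (∃ lf : LFChain (n + 1) Mt ℤ,
        lf.coeff = fun τ => ∑ᶠ γ ∈ V, ∑ j, if τ = γ • σ j then f j (γ⁻¹ • x) else 0) ∧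
      ∀ τ, bdryCoeff
        (fun τ' => ∑ᶠ γ ∈ V, ∑ j, if τ' = γ • σ j then f j (γ⁻¹ • x) else 0) τ = 0 := by
  have : Nonempty (SimplexCategory.toTopObj (SimplexCategory.mk (n + 1))) := ⟨vertex 0⟩
  have hrep : ∀ (γ γ' : Γ) (i j : Fin m), γ • σ i = γ' • σ j → γ = γ' ∧ i = j := by
    intro γ γ' i j h
    obtain rfl : i = j := hred i j (γ'⁻¹ * γ) (by rw [mul_smul, h, inv_smul_smul])
    exact ⟨smul_left_injective_of_free hfree (σ i) h, rfl⟩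
  set S := {τ | ∃ γ ∈ V, ∃ j, τ = γ • σ j}
  have hS : ∀ τ ∈ S, ∀ τ', c.coeff τ x ≠ 0 → c.coeff τ' x ≠ 0 →
      ∀ k l, faceMap k τ = faceMap l τ' → τ' ∈ S := by
    rintro _ ⟨γ, hγV, i, rfl⟩ τ' hi hτ' k l hkl
    obtain ⟨j, ℓ, rfl⟩ := hsupp τ' fun h => hτ' (congrFun h x)
    rw [hcoeff] at hi hτ'
    refine ⟨ℓ, ?_, j, rfl⟩
    by_cases hγℓ : γ = ℓ
    · exact hγℓ ▸ hγV
    · exact hVclosed γ hγV ℓ ((hEdge γ ℓ).2 ⟨hγℓ, i, j, k, l, hkl, hi, hτ'⟩)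
  rw [finsum_mem_sum_ite_eq_indicator hrep (h := fun τ => c.coeff τ x)
    (fun γ j => hcoeff j γ x) V]
  obtain ⟨lf, hlf⟩ := hcx_lf
  exact ⟨⟨lf.indicator S, by simp only [LFChain.indicator, hlf, S]⟩,
    bdryCoeff_indicator_eq_zero hcx_cycle hS⟩

/-- In the setup of the main theorem: whenever `{γ, ℓ}` is an edge of the graph `G_x`
(given by matching faces of the translated simplices, with both coefficient functions
supported at the corresponding points), the points `γ⁻¹·x` and `ℓ⁻¹·x` are
`R`-equivalent. -/
theorem edge_implies_R_equivalent
    (n : ℕ) (M : Type) [TopologicalSpace M] [T2Space M]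
    [ChartedSpace (EuclideanSpace ℝ (Fin (n + 1))) M] [CompactSpace M] [ConnectedSpace M]
    (horient : ∃ w : SSimplex (n + 1) M →₀ ℤ, IsFinFundCycle w)
    (Γ : Type) [Group Γ] [Countable Γ] (hΓ : Infinite Γ)
    (Mt : Type) [TopologicalSpace Mt] [SimplyConnectedSpace Mt]
    [MulAction Γ Mt] [ContinuousConstSMul Γ Mt]
    (p : C(Mt, M)) (hcov : IsCoveringMap ⇑p)
    (hdeck : ∀ (γ : Γ) (y : Mt), p (γ • y) = p y)
    (hfree : ∀ (γ : Γ) (y : Mt), γ • y = y → γ = 1)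
    (htrans : ∀ y z : Mt, p y = p z → ∃ γ : Γ, γ • y = z)
    (X : Type) [MeasurableSpace X] [StandardBorelSpace X]
    (μ : Measure X) [IsProbabilityMeasure μ] [MulAction Γ X]
    (hpres : ∀ γ : Γ, MeasurePreserving (fun x : X => γ • x) μ μ)
    (hessfree : ∀ᵐ x ∂μ, ∀ γ : Γ, γ ≠ 1 → γ • x ≠ x)
    (herg : IsErgodicRel μ fun x y : X => ∃ γ : Γ, y = γ • x)
    -- D is a relatively compact set-theoretic fundamental domain
    (D : Set Mt) (hDcpt : IsCompact (closure D))
    (hDfund : ∀ y : Mt, ∃! γ : Γ, y ∈ γ • D)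
    -- c = Σ_j f_j ⊗ σ_j is a parametrised fundamental cycle in reduced form
    (m : ℕ) (f : Fin m → X → ℤ) (σ : Fin m → SSimplex (n + 1) Mt)
    (c : ParamChain (n + 1) Γ Mt X ℤ) (hcfund : IsParamFundCycle p c)
    (hcoeff : ∀ (j) (γ : Γ) (x), c.coeff (γ • σ j) x = f j (γ⁻¹ • x))
    (hsupp : ∀ τ, c.coeff τ ≠ 0 → ∃ j, ∃ γ : Γ, τ = γ • σ j)
    (hred : ∀ i j (γ : Γ), γ • σ i = σ j → i = j)
    (hv0 : ∀ j, σ j (vertex 0) ∈ D)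
    (γj : Fin m → Γ) (hγj : ∀ j, σ j (vertex 1) ∈ γj j • D)
    (x : X)
    (Edge : Γ → Γ → Prop)
    (hEdge : ∀ γ ℓ : Γ, Edge γ ℓ ↔ γ ≠ ℓ ∧
      ∃ i j, ∃ k l : Fin (n + 2),
        faceMap k (γ • σ i) = faceMap l (ℓ • σ j) ∧
          f i (γ⁻¹ • x) ≠ 0 ∧ f j (ℓ⁻¹ • x) ≠ 0)
    -- `c_x` is a well-defined locally finite cycle
    (hcx_lf : ∃ lf : LFChain (n + 1) Mt ℤ, lf.coeff = fun τ => c.coeff τ x)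
    (hcx_cycle : ∀ τ, bdryCoeff (fun τ' => c.coeff τ' x) τ = 0)
    -- `V` is (the vertex set of) a connected component of `G_x`
    (V : Set Γ)
    (hVsub : V ⊆ {γ : Γ | ∃ j, f j (γ⁻¹ • x) ≠ 0})
    (hVclosed : ∀ γ ∈ V, ∀ ℓ, Edge γ ℓ → ℓ ∈ V)
    (hVconn : ∀ γ ∈ V, ∀ ℓ ∈ V, Relation.ReflTransGen Edge γ ℓ) :
    (∃ lf : LFChain (n + 1) Mt ℤ,
        lf.coeff = fun τ => ∑ᶠ γ ∈ V, ∑ j, if τ = γ • σ j then f j (γ⁻¹ • x) else 0) ∧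
      ∀ τ, bdryCoeff
        (fun τ' => ∑ᶠ γ ∈ V, ∑ j, if τ' = γ • σ j then f j (γ⁻¹ • x) else 0) τ = 0 :=
  edge_implies_R_equivalent_general n Γ Mt hfree X m f σ c hcoeff hsupp hred x Edge hEdge hcx_lf
    hcx_cycle V hVclosed


end Paper
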